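/- Let ((S,T),(U,V)) be a twin cotorsion pair on an extriangulated category B, and let B ↣ Z ↠ S (with inflation z: B → Z) be a reflection sequence for B. Then for any Y ∈ B^+: (1) the map (-∘z): B^+(Z,Y) → B(B,Y) is surjective; (2) the map (-∘z̲): B̲^+(Z,Y) → B̲(B,Y) is bijective, where B̲ = B/W. Consequently (Z, z̲) is a reflection of B along the inclusion B̲^+ ↪ B̲, and Z is uniquely determined by B up to isomorphism in B̲^+. -/

import Mathlib

namespace ExtriHearts

open CategoryTheory CategoryTheory.Limits Opposite

attribute [local instance] CategoryTheory.Limits.hasBinaryBiproducts_of_finite_biproducts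

universe v u v₂ u₂

section IdealQuotient

variable {D : Type u₂} [Category.{v₂} D] [Preadditive D]

/-- The subgroup of morphisms `X ⟶ Y` generated by those factoring through an object of `W`. -/
def wIdeal (W : Set D) (X Y : D) : AddSubgroup (X ⟶ Y) :=
  AddSubgroup.closure {f : X ⟶ Y | ∃ Z ∈ W, ∃ p : X ⟶ Z, ∃ q : Z ⟶ Y, f = p ≫ q}

/-- The hom relation on `D` identifying morphisms whose difference lies in the ideal
generated by morphisms factoring through an object of `W`.  (For an additively closed
subcategory `W` this is the usual relation "`f - g` factors through an object of `W`".) -/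
def wRel (W : Set D) : HomRel D := fun {X Y} f g => f - g ∈ wIdeal W X Y

lemma comp_left_mem_wIdeal (W : Set D) {X Y Z : D} (f : X ⟶ Y) {g : Y ⟶ Z}
    (hg : g ∈ wIdeal W Y Z) : f ≫ g ∈ wIdeal W X Z := by
  have hle : wIdeal W Y Z ≤ (wIdeal W X Z).comap (Preadditive.leftComp Z f) := by
    rw [wIdeal, AddSubgroup.closure_le]
    rintro g ⟨Z₀, hZ₀, p, q, rfl⟩
    exact AddSubgroup.subset_closure ⟨Z₀, hZ₀, f ≫ p, q, by
      simp [Preadditive.leftComp]⟩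
  simpa [Preadditive.leftComp] using hle hg

lemma comp_right_mem_wIdeal (W : Set D) {X Y Z : D} {f : X ⟶ Y} (g : Y ⟶ Z)
    (hf : f ∈ wIdeal W X Y) : f ≫ g ∈ wIdeal W X Z := by
  have hle : wIdeal W X Y ≤ (wIdeal W X Z).comap (Preadditive.rightComp X g) := by
    rw [wIdeal, AddSubgroup.closure_le]
    rintro f ⟨Z₀, hZ₀, p, q, rfl⟩
    exact AddSubgroup.subset_closure ⟨Z₀, hZ₀, p, q ≫ g, by
      simp [Preadditive.rightComp]⟩
  simpa [Preadditive.rightComp] using hle hf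

instance wRel_congruence (W : Set D) : Congruence (wRel W) where
  equivalence :=
    { refl := fun f => by
        show f - f ∈ wIdeal W _ _
        simp only [sub_self]
        exact zero_mem _
      symm := fun {f g} h => by
        have h' : f - g ∈ wIdeal W _ _ := h
        show g - f ∈ wIdeal W _ _
        simpa only [neg_sub] using neg_mem h'
      trans := fun {f g h} h₁ h₂ => by
        have h₁' : f - g ∈ wIdeal W _ _ := h₁
        have h₂' : g - h ∈ wIdeal W _ _ := h₂
        show f - h ∈ wIdeal W _ _
        simpa only [sub_add_sub_cancel] using add_mem h₁' h₂' }
  comp_left := fun {X Y Z} f {g g'} h => by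
    have h' : g - g' ∈ wIdeal W _ _ := h
    show f ≫ g - f ≫ g' ∈ wIdeal W _ _
    simpa only [← Preadditive.comp_sub] using comp_left_mem_wIdeal W f h'
  comp_right := fun {X Y Z} {f f'} g h => by
    have h' : f - f' ∈ wIdeal W _ _ := h
    show f ≫ g - f' ≫ g ∈ wIdeal W _ _
    simpa only [← Preadditive.sub_comp] using comp_right_mem_wIdeal W g h'

/-- The quotient of a preadditive category by (the ideal generated by) the morphisms factoring
through a class of objects `W`. -/
abbrev QuotCat (W : Set D) := CategoryTheory.Quotient (wRel W)

/-- The canonical quotient functor. -/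
abbrev toQuot (W : Set D) : D ⥤ QuotCat W := Quotient.functor _

instance quotCatPreadditive (W : Set D) : Preadditive (QuotCat W) :=
  Quotient.preadditive _ (fun X Y f₁ f₂ g₁ g₂ h₁ h₂ => by
    have h₁' : f₁ - f₂ ∈ wIdeal W X Y := h₁
    have h₂' : g₁ - g₂ ∈ wIdeal W X Y := h₂
    show f₁ + g₁ - (f₂ + g₂) ∈ wIdeal W X Y
    have heq : f₁ + g₁ - (f₂ + g₂) = f₁ - f₂ + (g₁ - g₂) := by abel
    rw [heq]
    exact add_mem h₁' h₂')

end IdealQuotient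

section ExtCat

/-- The data of an additive `Ab`-valued bifunctor together with a realization predicate:
`realize δ x y` means that the 3-term sequence `A --x--> X --y--> C` realizes the
`E`-extension `δ ∈ E(C,A)`, i.e. belongs to the equivalence class `s(δ)`. -/
structure PreExtStruct (B : Type u) [Category.{v} B] [Preadditive B] where
  /-- The additive bifunctor `E : Bᵒᵖ × B → Ab`. -/
  E : Bᵒᵖ ⥤ B ⥤ AddCommGrpCat.{v}

namespace PreExtStruct

variable {B : Type u} [Category.{v} B] [Preadditive B]

/-- The abelian group `E(C,A)` of `E`-extensions of `C` by `A`. -/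
abbrev Ext (σ : PreExtStruct B) (C A : B) : AddCommGrpCat.{v} := (σ.E.obj (op C)).obj A

/-- `a_* δ`, the pushforward of an `E`-extension along `a : A ⟶ A'`. -/
def push (σ : PreExtStruct B) {C A A' : B} (a : A ⟶ A') (δ : σ.Ext C A) : σ.Ext C A' :=
  (σ.E.obj (op C)).map a δ

/-- `c^* δ`, the pullback of an `E`-extension along `c : C' ⟶ C`. -/
def pull (σ : PreExtStruct B) {C' C A : B} (c : C' ⟶ C) (δ : σ.Ext C A) : σ.Ext C' A :=
  (σ.E.map c.op).app A δ

/-- The direct sum `δ ⊕ δ'` of two `E`-extensions, i.e. the element of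
`E(C ⊞ C', A ⊞ A')` corresponding to `(δ, 0, 0, δ')`. -/
noncomputable def sumExt (σ : PreExtStruct B) [HasBinaryBiproducts B] {C C' A A' : B}
    (δ : σ.Ext C A) (δ' : σ.Ext C' A') : σ.Ext (C ⊞ C') (A ⊞ A') :=
  σ.push biprod.inl (σ.pull biprod.fst δ) + σ.push biprod.inr (σ.pull biprod.snd δ')

end PreExtStruct

/-- An *extriangulated category* structure `(E, s)` on an additive category `B`, consisting of
an additive bifunctor `E : Bᵒᵖ × B → Ab` and an additive realization `s` of `E` (encoded by the
predicate `realize`), subject to the axioms (ET1), (ET2), (ET3), (ET3)ᵒᵖ, (ET4), (ET4)ᵒᵖ of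
Nakaoka–Palu. -/
structure ExtStruct (B : Type u) [Category.{v} B] [Preadditive B] [HasFiniteBiproducts B]
    extends PreExtStruct B where
  /-- (ET1) `E` is additive in the second variable. -/
  additive_fst : ∀ Cop : Bᵒᵖ, (E.obj Cop).Additive
  /-- (ET1) `E` is additive in the first variable. -/
  additive_snd : ∀ A : B, (E.flip.obj A).Additive
  /-- `realize δ x y` means the sequence `A --x--> X --y--> C` realizes `δ`, i.e. it belongs to
  the equivalence class `s(δ)`. -/
  realize : ∀ ⦃A C : B⦄, toPreExtStruct.Ext C A → ∀ ⦃X : B⦄, (A ⟶ X) → (X ⟶ C) → Prop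
  /-- Every `E`-extension is realized by some sequence. -/
  realize_ex : ∀ ⦃A C : B⦄ (δ : toPreExtStruct.Ext C A),
      ∃ (X : B) (x : A ⟶ X) (y : X ⟶ C), realize δ x y
  /-- `s(δ)` is closed under the equivalence of sequences. -/
  realize_iso : ∀ ⦃A C X X' : B⦄ (δ : toPreExtStruct.Ext C A) (x : A ⟶ X) (y : X ⟶ C)
      (b : X ≅ X'), realize δ x y → realize δ (x ≫ b.hom) (b.inv ≫ y)
  /-- Any two realizations of `δ` are equivalent sequences. -/
  realize_unique : ∀ ⦃A C X X' : B⦄ (δ : toPreExtStruct.Ext C A) (x : A ⟶ X) (y : X ⟶ C)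
      (x' : A ⟶ X') (y' : X' ⟶ C), realize δ x y → realize δ x' y' →
      ∃ b : X ≅ X', x ≫ b.hom = x' ∧ b.hom ≫ y' = y
  /-- (ET2)(∗) Any morphism of `E`-extensions is realized by a morphism of sequences. -/
  realize_map : ∀ ⦃A C A' C' X X' : B⦄ (δ : toPreExtStruct.Ext C A) (δ' : toPreExtStruct.Ext C' A')
      (x : A ⟶ X) (y : X ⟶ C) (x' : A' ⟶ X') (y' : X' ⟶ C') (a : A ⟶ A') (c : C ⟶ C'),
      realize δ x y → realize δ' x' y' →
      toPreExtStruct.push a δ = toPreExtStruct.pull c δ' →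
      ∃ b : X ⟶ X', x ≫ b = a ≫ x' ∧ y ≫ c = b ≫ y'
  /-- (ET2)(i) The split extension is realized by the split sequence. -/
  realize_zero : ∀ A C : B,
      realize (0 : toPreExtStruct.Ext C A) (biprod.inl : A ⟶ A ⊞ C) (biprod.snd : A ⊞ C ⟶ C)
  /-- (ET2)(ii) Realization is additive. -/
  realize_sum : ∀ ⦃A C A' C' X X' : B⦄ (δ : toPreExtStruct.Ext C A)
      (δ' : toPreExtStruct.Ext C' A') (x : A ⟶ X) (y : X ⟶ C) (x' : A' ⟶ X') (y' : X' ⟶ C'),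
      realize δ x y → realize δ' x' y' →
      realize (toPreExtStruct.sumExt δ δ') (biprod.map x x') (biprod.map y y')
  /-- (ET3) -/
  et3 : ∀ ⦃A C A' C' X X' : B⦄ (δ : toPreExtStruct.Ext C A) (δ' : toPreExtStruct.Ext C' A')
      (x : A ⟶ X) (y : X ⟶ C) (x' : A' ⟶ X') (y' : X' ⟶ C'),
      realize δ x y → realize δ' x' y' → ∀ (a : A ⟶ A') (b : X ⟶ X'), x ≫ b = a ≫ x' →
      ∃ c : C ⟶ C', toPreExtStruct.push a δ = toPreExtStruct.pull c δ' ∧ y ≫ c = b ≫ y'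
  /-- (ET3)ᵒᵖ -/
  et3op : ∀ ⦃A C A' C' X X' : B⦄ (δ : toPreExtStruct.Ext C A) (δ' : toPreExtStruct.Ext C' A')
      (x : A ⟶ X) (y : X ⟶ C) (x' : A' ⟶ X') (y' : X' ⟶ C'),
      realize δ x y → realize δ' x' y' → ∀ (b : X ⟶ X') (c : C ⟶ C'), y ≫ c = b ≫ y' →
      ∃ a : A ⟶ A', toPreExtStruct.push a δ = toPreExtStruct.pull c δ' ∧ x ≫ b = a ≫ x'
  /-- (ET4) -/
  et4 : ∀ ⦃A B₀ D C F : B⦄ (δ : toPreExtStruct.Ext D A) (f : A ⟶ B₀) (f' : B₀ ⟶ D)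
      (δ' : toPreExtStruct.Ext F B₀) (g : B₀ ⟶ C) (g' : C ⟶ F),
      realize δ f f' → realize δ' g g' →
      ∃ (E₀ : B) (d : D ⟶ E₀) (e : E₀ ⟶ F) (h' : C ⟶ E₀) (δ'' : toPreExtStruct.Ext E₀ A),
        g ≫ h' = f' ≫ d ∧ h' ≫ e = g' ∧
        realize δ'' (f ≫ g) h' ∧ realize (toPreExtStruct.push f' δ') d e ∧
        toPreExtStruct.pull d δ'' = δ ∧ toPreExtStruct.push f δ'' = toPreExtStruct.pull e δ'
  /-- (ET4)ᵒᵖ -/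
  et4op : ∀ ⦃F C B₀ D A : B⦄ (δ' : toPreExtStruct.Ext B₀ F) (s : F ⟶ C) (t : C ⟶ B₀)
      (δ : toPreExtStruct.Ext A D) (u : D ⟶ B₀) (v : B₀ ⟶ A),
      realize δ' s t → realize δ u v →
      ∃ (E₀ : B) (e : F ⟶ E₀) (d : E₀ ⟶ D) (m : E₀ ⟶ C) (δ'' : toPreExtStruct.Ext A E₀),
        m ≫ t = d ≫ u ∧ e ≫ m = s ∧
        realize δ'' m (t ≫ v) ∧ realize (toPreExtStruct.pull u δ') e d ∧
        toPreExtStruct.push d δ'' = δ ∧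
        toPreExtStruct.pull v δ'' = toPreExtStruct.push e δ'

namespace ExtStruct

variable {B : Type u} [Category.{v} B] [Preadditive B] [HasFiniteBiproducts B] (σ : ExtStruct B)

/-- A sequence `A --x--> X --y--> C` is a conflation if it realizes some `E`-extension. -/
def Conflation {A X C : B} (x : A ⟶ X) (y : X ⟶ C) : Prop :=
  ∃ δ : σ.Ext C A, σ.realize δ x y

/-- `Cone(D₁, D₂)`: objects `X` admitting a conflation `D₁ ↣ D₂ ↠ X`. -/
def Cone (D₁ D₂ : Set B) : Set B :=
  {X | ∃ (A Y : B) (f : A ⟶ Y) (g : Y ⟶ X), A ∈ D₁ ∧ Y ∈ D₂ ∧ σ.Conflation f g}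

/-- `CoCone(D₁, D₂)`: objects `X` admitting a conflation `X ↣ D₁ ↠ D₂`. -/
def CoCone (D₁ D₂ : Set B) : Set B :=
  {X | ∃ (Y C : B) (f : X ⟶ Y) (g : Y ⟶ C), Y ∈ D₁ ∧ C ∈ D₂ ∧ σ.Conflation f g}

/-- `D₁ ∗ D₂`: objects `X` admitting a conflation `D₁ ↣ X ↠ D₂`. -/
def star (D₁ D₂ : Set B) : Set B :=
  {X | ∃ (A C : B) (f : A ⟶ X) (g : X ⟶ C), A ∈ D₁ ∧ C ∈ D₂ ∧ σ.Conflation f g}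

/-- `add(D₁ ∗ D₂)`: direct summands of objects of `D₁ ∗ D₂`. -/
def addStar (D₁ D₂ : Set B) : Set B :=
  {X | ∃ Y ∈ σ.star D₁ D₂, ∃ (s : X ⟶ Y) (r : Y ⟶ X), s ≫ r = 𝟙 X}

/-- An object `P` is projective if `E(P, −) = 0`. -/
def IsProj (P : B) : Prop := ∀ (A : B) (δ : σ.Ext P A), δ = 0

/-- An object `I` is injective if `E(−, I) = 0`. -/
def IsInj (I : B) : Prop := ∀ (C : B) (δ : σ.Ext C I), δ = 0

/-- The class of projective objects. -/
def projs : Set B := {P | σ.IsProj P}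

/-- `B` has enough projectives: every object admits a deflation from a projective. -/
def EnoughProj : Prop :=
  ∀ X : B, ∃ (P K : B) (i : K ⟶ P) (p : P ⟶ X), σ.IsProj P ∧ σ.Conflation i p

/-- `B` has enough injectives: every object admits an inflation into an injective. -/
def EnoughInj : Prop :=
  ∀ X : B, ∃ (I C : B) (i : X ⟶ I) (p : I ⟶ C), σ.IsInj I ∧ σ.Conflation i p

end ExtStruct

/-- A full additive subcategory (given as a class of objects), closed under isomorphisms and
direct summands. -/
structure AddClosed {B : Type u} [Category.{v} B] [Preadditive B] [HasFiniteBiproducts B]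
    (U : Set B) : Prop where
  zero_mem : ∀ Z : B, IsZero Z → Z ∈ U
  biprod_mem : ∀ X Y : B, X ∈ U → Y ∈ U → (X ⊞ Y) ∈ U
  summand_mem : ∀ X Y : B, Y ∈ U → ∀ (s : X ⟶ Y) (r : Y ⟶ X), s ≫ r = 𝟙 X → X ∈ U

namespace ExtStruct

variable {B : Type u} [Category.{v} B] [Preadditive B] [HasFiniteBiproducts B] (σ : ExtStruct B)

/-- A (complete) cotorsion pair `(U, V)` on an extriangulated category. -/
structure IsCotorsionPair (U V : Set B) : Prop where
  addU : AddClosed U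
  addV : AddClosed V
  ext_vanish : ∀ ⦃X : B⦄, X ∈ U → ∀ ⦃Y : B⦄, Y ∈ V → ∀ δ : σ.Ext X Y, δ = 0
  resolve : ∀ X : B, ∃ (V₀ U₀ : B) (f : V₀ ⟶ U₀) (g : U₀ ⟶ X),
      V₀ ∈ V ∧ U₀ ∈ U ∧ σ.Conflation f g
  coresolve : ∀ X : B, ∃ (V₀ U₀ : B) (f : X ⟶ V₀) (g : V₀ ⟶ U₀),
      V₀ ∈ V ∧ U₀ ∈ U ∧ σ.Conflation f g

/-- A twin cotorsion pair `((S,T), (U,V))`. -/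
structure IsTwinCotorsionPair (S T U V : Set B) : Prop where
  fst : σ.IsCotorsionPair S T
  snd : σ.IsCotorsionPair U V
  ext_SV : ∀ ⦃X : B⦄, X ∈ S → ∀ ⦃Y : B⦄, Y ∈ V → ∀ δ : σ.Ext X Y, δ = 0

section Twin

variable (S T U V : Set B)

/-- `B⁺ = Cone(V, W)` for the core `W = T ∩ U` of a twin cotorsion pair. -/
def tPos : Set B := σ.Cone V (T ∩ U)

/-- `B⁻ = CoCone(W, S)` for the core `W = T ∩ U` of a twin cotorsion pair. -/
def tNeg : Set B := σ.CoCone (T ∩ U) S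

/-- The class of objects of the heart `H = B⁺ ∩ B⁻` of a twin cotorsion pair. -/
def tHeartSet : Set B := σ.tPos T U V ∩ σ.tNeg S T U

/-- The heart `H/W` of a twin cotorsion pair, as a full subcategory of the quotient
category `B/W`. -/
abbrev THeart := ObjectProperty.FullSubcategory (fun X : QuotCat (T ∩ U : Set B) => X.as ∈ σ.tHeartSet S T U V)


/-- A *reflection sequence* for `B₀`: a conflation `B₀ ↣ Z ↠ S₀` with `Z ∈ B⁺`, `S₀ ∈ S`,
such that `z^* : E(Z, V₀) → E(B₀, V₀)` is surjective for every `V₀ ∈ V`. -/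
def IsReflectionSeq {B₀ Z S₀ : B} (z : B₀ ⟶ Z) (w : Z ⟶ S₀) : Prop :=
  Z ∈ σ.tPos T U V ∧ S₀ ∈ S ∧ σ.Conflation z w ∧
    ∀ ⦃V₀ : B⦄, V₀ ∈ V → Function.Surjective (fun δ : σ.Ext Z V₀ => σ.pull z δ)

/-- A *coreflection sequence* for `B₀`: a conflation `V₀ ↣ X ↠ B₀` with `X ∈ B⁻`, `V₀ ∈ V`,
such that `x_* : E(S₀, X) → E(S₀, B₀)` is surjective for every `S₀ ∈ S`. -/
def IsCoreflectionSeq {V₀ X B₀ : B} (v : V₀ ⟶ X) (x : X ⟶ B₀) : Prop :=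
  X ∈ σ.tNeg S T U ∧ V₀ ∈ V ∧ σ.Conflation v x ∧
    ∀ ⦃S₀ : B⦄, S₀ ∈ S → Function.Surjective (fun δ : σ.Ext S₀ X => σ.push x δ)

end Twin

section Single

variable (U V : Set B)

/-- `B⁺` for a single cotorsion pair `(U,V)`, with core `W = U ∩ V`. -/
def sPos : Set B := σ.Cone V (U ∩ V)

/-- `B⁻` for a single cotorsion pair `(U,V)`, with core `W = U ∩ V`. -/
def sNeg : Set B := σ.CoCone (U ∩ V) U

/-- The class of objects of the heart of a single cotorsion pair. -/
def sHeartSet : Set B := σ.sPos U V ∩ σ.sNeg U V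

/-- The heart `H/W` of a cotorsion pair `(U,V)`, a full subcategory of `B/W`, `W = U ∩ V`. -/
abbrev SHeart := ObjectProperty.FullSubcategory (fun X : QuotCat (U ∩ V : Set B) => X.as ∈ σ.sHeartSet U V)

/-- The inclusion of the heart into the quotient category `B/W`. -/
abbrev sHeartIncl : σ.SHeart U V ⥤ QuotCat (U ∩ V : Set B) := ObjectProperty.ι _

/-- The kernel `K = add(U ∗ V)` of a cotorsion pair. -/
def kernelSet : Set B := σ.addStar U V

/-- The coheart `C = ⊥₁K` of a cotorsion pair. -/
def coheart : Set B := {X | ∀ ⦃K : B⦄, K ∈ σ.kernelSet U V → ∀ δ : σ.Ext X K, δ = 0}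


/-- An object of the heart determined by an object of `B` lying in `B⁺ ∩ B⁻`. -/
def sHeartObj {X : B} (hX : X ∈ σ.sHeartSet U V) : σ.SHeart U V :=
  ⟨(toQuot (U ∩ V : Set B)).obj X, hX⟩

/-- The image in the heart of a morphism of `B` between objects of `B⁺ ∩ B⁻`. -/
def sHeartHom {X Y : B} (hX : X ∈ σ.sHeartSet U V) (hY : Y ∈ σ.sHeartSet U V) (f : X ⟶ Y) :
    σ.sHeartObj U V hX ⟶ σ.sHeartObj U V hY :=
  ObjectProperty.homMk ((toQuot (U ∩ V : Set B)).map f)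

end Single

end ExtStruct

end ExtCat

section More

variable {B : Type u} [Category.{v} B] [Preadditive B] [HasFiniteBiproducts B]

namespace ExtStruct

variable (σ : ExtStruct B)

/-- `Ω D₀ = CoCone(P, D₀)`, the syzygy class of a class of objects `D₀`. -/
def omegaSet (D₀ : Set B) : Set B := σ.CoCone σ.projs D₀

/-- A choice of iterated syzygies of `X`: `Z 0 = X` and for each `i` there is a conflation
`Z (i+1) ↣ P ↠ Z i` with `P` projective. -/
def SyzygyChain (X : B) (Z : ℕ → B) : Prop :=
  Z 0 = X ∧ ∀ i : ℕ, ∃ (P : B) (f : Z (i + 1) ⟶ P) (g : P ⟶ Z i),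
    σ.IsProj P ∧ σ.Conflation f g

/-- A choice of iterated cosyzygies of `Y`: `Z 0 = Y` and for each `i` there is a conflation
`Z i ↣ I ↠ Z (i+1)` with `I` injective. -/
def CosyzygyChain (Y : B) (Z : ℕ → B) : Prop :=
  Z 0 = Y ∧ ∀ i : ℕ, ∃ (I : B) (f : Z i ⟶ I) (g : I ⟶ Z (i + 1)),
    σ.IsInj I ∧ σ.Conflation f g

/-- Vanishing of the higher extension group `E^{i+1}(X, Y) = E(X, Σ^i Y)`, expressed via
cosyzygy chains.  (`hExtVanish σ X Y 0` is the vanishing of `E(X,Y)` itself.) -/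
def hExtVanish (X Y : B) (i : ℕ) : Prop :=
  ∀ Z : ℕ → B, σ.CosyzygyChain Y Z → ∀ δ : σ.Ext X (Z i), δ = 0

/-- `Σ^j D₀`: the class of `j`-th cosyzygies of objects of `D₀`. -/
def sigmaSet (j : ℕ) (D₀ : Set B) : Set B :=
  {X | ∃ Y ∈ D₀, ∃ Z : ℕ → B, σ.CosyzygyChain Y Z ∧ Z j = X}

/-- An `n`-cluster tilting subcategory of an extriangulated category:
it is functorially finite, and `X ∈ M` iff `E^i(X, M) = 0` for `1 ≤ i ≤ n - 1`,
iff `E^i(M, X) = 0` for `1 ≤ i ≤ n - 1`. -/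
structure IsNClusterTilting (n : ℕ) (M : Set B) : Prop where
  contravariantly_finite : ∀ X : B, ∃ M₀ ∈ M, ∃ f : M₀ ⟶ X,
      ∀ M₁ ∈ M, ∀ g : M₁ ⟶ X, ∃ h : M₁ ⟶ M₀, h ≫ f = g
  covariantly_finite : ∀ X : B, ∃ M₀ ∈ M, ∃ f : X ⟶ M₀,
      ∀ M₁ ∈ M, ∀ g : X ⟶ M₁, ∃ h : M₀ ⟶ M₁, f ≫ h = g
  mem_iff_vanish_left : ∀ X : B,
      X ∈ M ↔ ∀ i : ℕ, i ≤ n - 2 → ∀ Y ∈ M, σ.hExtVanish X Y i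
  mem_iff_vanish_right : ∀ X : B,
      X ∈ M ↔ ∀ i : ℕ, i ≤ n - 2 → ∀ Y ∈ M, σ.hExtVanish Y X i

/-- `mlev σ M k` is the subcategory `M_{k+1}` of the paper: `M_1 = M` and
`M_{ℓ} = Cone(M_{ℓ-1}, M)`. -/
def mlev (M : Set B) : ℕ → Set B
  | 0 => M
  | (k + 1) => σ.Cone (mlev M k) M

end ExtStruct

section Reflectors

variable (W P N : Set B)

/-- The data of a reflection functor `σ⁺` onto the objects of `B⁺` (given by the class `P`),
i.e. a left adjoint of the inclusion of the full subcategory of `B/W` on `P` in the bijection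
formulation: composing with the unit `B → σ⁺B` gives bijections
`(σ⁺X ⟶ Y) ≃ (X ⟶ Y)` for all `Y` lying in `P`. -/
structure ReflectorData where
  σp : QuotCat W ⥤ QuotCat W
  mem : ∀ X : QuotCat W, (σp.obj X).as ∈ P
  unit : 𝟭 (QuotCat W) ⟶ σp
  bij : ∀ (X Y : QuotCat W), Y.as ∈ P →
      Function.Bijective (fun g : (σp.obj X ⟶ Y) => unit.app X ≫ g)

/-- The data of a coreflection functor `σ⁻` onto the objects of `B⁻` (given by the class `N`). -/
structure CoreflectorData where
  σm : QuotCat W ⥤ QuotCat W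
  mem : ∀ X : QuotCat W, (σm.obj X).as ∈ N
  counit : σm ⟶ 𝟭 (QuotCat W)
  bij : ∀ (X Y : QuotCat W), X.as ∈ N →
      Function.Bijective (fun g : (X ⟶ σm.obj Y) => g ≫ counit.app Y)

end Reflectors

namespace ExtStruct

variable (σ : ExtStruct B)

/-- The data of the cohomological functor `H = σ⁻ ∘ σ⁺ ∘ π : B → H` associated to a cotorsion
pair `(U, V)`: reflection and coreflection functors together with a functor `H` to the heart
which is isomorphic to `σ⁻ ∘ σ⁺ ∘ π` after composition with the inclusion of the heart. -/
structure HeartFunctorData (U V : Set B) where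
  refl : ReflectorData (B := B) (U ∩ V) (σ.sPos U V)
  corefl : CoreflectorData (B := B) (U ∩ V) (σ.sNeg U V)
  H : B ⥤ σ.SHeart U V
  iso : (H ⋙ σ.sHeartIncl U V) ≅ (toQuot (U ∩ V : Set B) ⋙ refl.σp ⋙ corefl.σm)

end ExtStruct

section Mod

variable (D : Type u₂) [Category.{v₂} D] [Preadditive D]

/-- A coherent (finitely presented) functor `Dᵒᵖ ⥤ Ab`: one admitting an exact presentation
`Hom(−,X) → Hom(−,Y) → F → 0`. -/
def IsCoherent (F : Dᵒᵖ ⥤ AddCommGrpCat.{v₂}) : Prop :=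
  ∃ (X Y : D) (f : X ⟶ Y) (η : preadditiveYoneda.obj Y ⟶ F),
    (∀ A : D, Function.Surjective (η.app (op A))) ∧
    (∀ (A : D) (g : A ⟶ Y), η.app (op A) g = 0 ↔ ∃ h : A ⟶ X, h ≫ f = g)

/-- `mod D`: the category of coherent functors `Dᵒᵖ ⥤ Ab`. -/
abbrev ModCat := ObjectProperty.FullSubcategory (fun F : Dᵒᵖ ⥤ AddCommGrpCat.{v₂} => IsCoherent D F)

end Mod

/-- The additive quotient `C/P` of the full subcategory of `B` on a class `C₀` of objects by
(the ideal of) morphisms factoring through objects satisfying `P₀`. -/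
abbrev StableCat (C₀ P₀ : Set B) :=
  QuotCat (D := ObjectProperty.FullSubcategory (fun X : B => X ∈ C₀)) {Z | Z.obj ∈ P₀}

end More

/-!
Let `Y ∈ B⁺` be presented by `V₁ ↣ W₁ ↠ Y`, realizing `δ_Y`. For `f : B₀ ⟶ Y`, lift
`f^* δ_Y ∈ E(B₀, V₁)` along `z^*` to `θ ∈ E(Z, V₁)`. Since `E(S, T) = 0`, the exactness of
`E(S₀, W₁) → E(Z, W₁) → E(B₀, W₁)` forces `m_* θ = 0`, so `θ = g^* δ_Y` for some `g : Z ⟶ Y`; then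
`f - z ≫ g` factors through `W₁`, and its factor `B₀ ⟶ W₁` extends along `z`, again by
`E(S, T) = 0`. If `z ≫ g` factors through `W`, the same extension argument writes `g` as a
morphism through `W` plus one through `w : Z ⟶ S₀`, and morphisms `S₀ ⟶ Y` factor through `W₁`
because `E(S, V) = 0`. Uniqueness of `Z` is then the uniqueness of a reflection.
-/

namespace PreExtStruct

variable {B : Type u} [Category.{v} B] [Preadditive B] (σ : PreExtStruct B)

@[simp]
lemma push_zero {C A A' : B} (a : A ⟶ A') : σ.push a (0 : σ.Ext C A) = 0 := map_zero _

@[simp]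
lemma pull_zero {C' C A : B} (c : C' ⟶ C) : σ.pull c (0 : σ.Ext C A) = 0 := map_zero _

@[simp]
lemma push_id {C A : B} (δ : σ.Ext C A) : σ.push (𝟙 A) δ = δ := by simp [push]

lemma push_comp {C A A' A'' : B} (a : A ⟶ A') (b : A' ⟶ A'') (δ : σ.Ext C A) :
    σ.push (a ≫ b) δ = σ.push b (σ.push a δ) := by simp [push]

lemma pull_comp {C'' C' C A : B} (c : C'' ⟶ C') (d : C' ⟶ C) (δ : σ.Ext C A) :
    σ.pull (c ≫ d) δ = σ.pull c (σ.pull d δ) := by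
  simp [pull, op_comp]

lemma push_pull {C' C A A' : B} (a : A ⟶ A') (c : C' ⟶ C) (δ : σ.Ext C A) :
    σ.push a (σ.pull c δ) = σ.pull c (σ.push a δ) :=
  (NatTrans.naturality_apply (σ.E.map c.op) a δ).symm

end PreExtStruct

lemma AddClosed.inter {B : Type u} [Category.{v} B] [Preadditive B] [HasFiniteBiproducts B]
    {T U : Set B} (hT : AddClosed T) (hU : AddClosed U) : AddClosed (T ∩ U) where
  zero_mem Z hZ := ⟨hT.zero_mem Z hZ, hU.zero_mem Z hZ⟩
  biprod_mem X Y hX hY := ⟨hT.biprod_mem X Y hX.1 hY.1, hU.biprod_mem X Y hX.2 hY.2⟩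
  summand_mem X Y hY s r hsr := ⟨hT.summand_mem X Y hY.1 s r hsr, hU.summand_mem X Y hY.2 s r hsr⟩

open ZeroObject in
lemma exists_factor_of_mem_wIdeal {B : Type u} [Category.{v} B] [Preadditive B]
    [HasFiniteBiproducts B] {W : Set B} (hW : AddClosed W) {X Y : B} {f : X ⟶ Y}
    (hf : f ∈ wIdeal W X Y) : ∃ Z ∈ W, ∃ p : X ⟶ Z, ∃ q : Z ⟶ Y, f = p ≫ q := by
  let factoring : AddSubgroup (X ⟶ Y) :=
    { carrier := {g | ∃ Z ∈ W, ∃ p : X ⟶ Z, ∃ q : Z ⟶ Y, g = p ≫ q}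
      zero_mem' := ⟨0, hW.zero_mem 0 (isZero_zero B), 0, 0, by simp⟩
      add_mem' := by
        rintro _ _ ⟨Za, hZa, pa, qa, rfl⟩ ⟨Zb, hZb, pb, qb, rfl⟩
        exact ⟨Za ⊞ Zb, hW.biprod_mem _ _ hZa hZb, biprod.lift pa pb, biprod.desc qa qb, by simp⟩
      neg_mem' := by
        rintro _ ⟨Za, hZa, pa, qa, rfl⟩
        exact ⟨Za, hZa, pa, -qa, by simp⟩ }
  exact (AddSubgroup.closure_le factoring).2 (fun _ hg => hg) hf

lemma bijective_toQuot_map_comp {D : Type u₂} [Category.{v₂} D] [Preadditive D] {W : Set D}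
    {X Z Y : D} (z : X ⟶ Z) (hsurj : ∀ f : X ⟶ Y, ∃ g : Z ⟶ Y, z ≫ g = f)
    (hinj : ∀ g : Z ⟶ Y, z ≫ g ∈ wIdeal W X Y → g ∈ wIdeal W Z Y) :
    Function.Bijective
      (fun g : (toQuot W).obj Z ⟶ (toQuot W).obj Y => (toQuot W).map z ≫ g) := by
  constructor
  · intro g₁ g₂ hg
    obtain ⟨G₁, rfl⟩ := (toQuot W).map_surjective g₁
    obtain ⟨G₂, rfl⟩ := (toQuot W).map_surjective g₂
    simp only [← Functor.map_comp, Quotient.functor_map_eq_iff] at hg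
    rw [Quotient.functor_map_eq_iff]
    exact hinj _ (by rw [Preadditive.comp_sub]; exact hg)
  · intro φ
    obtain ⟨f, rfl⟩ := (toQuot W).map_surjective φ
    obtain ⟨g, rfl⟩ := hsurj f
    exact ⟨(toQuot W).map g, ((toQuot W).map_comp z g).symm⟩

def isoOfInjectiveComp {C : Type u₂} [Category.{v₂} C] {X A A' : C} {z : X ⟶ A} {z' : X ⟶ A'}
    (hz : Function.Injective (fun g : A ⟶ A => z ≫ g))
    (hz' : Function.Injective (fun g : A' ⟶ A' => z' ≫ g))
    (u : A ⟶ A') (v : A' ⟶ A) (hu : z ≫ u = z') (hv : z' ≫ v = z) : A ≅ A' where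
  hom := u
  inv := v
  hom_inv_id := hz (by simp only [reassoc_of% hu, hv, Category.comp_id])
  inv_hom_id := hz' (by simp only [reassoc_of% hv, hu, Category.comp_id])

namespace ExtStruct

variable {B : Type u} [Category.{v} B] [Preadditive B] [HasFiniteBiproducts B] {σ : ExtStruct B}

lemma pull_sub {C' C A : B} (c c' : C' ⟶ C) (δ : σ.Ext C A) :
    σ.pull (c - c') δ = σ.pull c δ - σ.pull c' δ := by
  have := σ.additive_snd A
  have h := congrArg (fun φ => φ δ) ((σ.E.flip.obj A).map_sub (f := c.op) (g := c'.op))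
  simpa [PreExtStruct.pull] using h

section Realization

variable {A X C : B} {δ : σ.Ext C A} {x : A ⟶ X} {y : X ⟶ C}

lemma push_inflation_eq_zero (h : σ.realize δ x y) : σ.push x δ = 0 := by
  obtain ⟨a, ha, hax⟩ := σ.et3op δ (0 : σ.Ext C X) x y biprod.inl biprod.snd h
    (σ.realize_zero X C) (biprod.lift (𝟙 X) y) (𝟙 C) (by simp)
  have : a = x := by simpa using (congrArg (· ≫ biprod.fst) hax).symm
  rw [← this, ha, PreExtStruct.pull_zero]

lemma exists_inflation_comp_eq_of_push_eq_zero (h : σ.realize δ x y) {Q : B} {f : A ⟶ Q}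
    (hf : σ.push f δ = 0) : ∃ g : X ⟶ Q, x ≫ g = f := by
  obtain ⟨b, hb, -⟩ := σ.realize_map δ (0 : σ.Ext C Q) x y biprod.inl biprod.snd f (𝟙 C)
    h (σ.realize_zero Q C) (by rw [hf, PreExtStruct.pull_zero])
  exact ⟨b ≫ biprod.fst, by rw [reassoc_of% hb]; simp⟩

lemma exists_comp_deflation_eq_of_pull_eq_zero (h : σ.realize δ x y) {Q : B} {f : Q ⟶ C}
    (hf : σ.pull f δ = 0) : ∃ t : Q ⟶ X, t ≫ y = f := by
  obtain ⟨b, -, hb⟩ := σ.realize_map (0 : σ.Ext Q A) δ biprod.inl biprod.snd x y (𝟙 A) f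
    (σ.realize_zero A Q) h (by rw [hf, PreExtStruct.push_zero])
  exact ⟨biprod.inr ≫ b, by rw [Category.assoc, ← hb]; simp⟩

lemma exists_deflation_comp_eq_of_inflation_comp_eq_zero (h : σ.realize δ x y) {Q : B}
    {f : X ⟶ Q} (hf : x ≫ f = 0) : ∃ c : C ⟶ Q, y ≫ c = f := by
  obtain ⟨c, -, hc⟩ := σ.et3 δ (0 : σ.Ext Q Q) x y biprod.inl biprod.snd h
    (σ.realize_zero Q Q) 0 (biprod.lift 0 f) (by ext <;> simp [hf])
  exact ⟨c, by rw [hc]; simp⟩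

lemma exists_retraction_of_realize_zero (h : σ.realize (0 : σ.Ext C A) x y) :
    ∃ r : X ⟶ A, x ≫ r = 𝟙 A := by
  obtain ⟨b, hb, -⟩ := σ.realize_unique 0 x y biprod.inl biprod.snd h (σ.realize_zero A C)
  exact ⟨b.hom ≫ biprod.fst, by rw [reassoc_of% hb]; simp⟩

/-- Exactness of `E(C, Q) → E(X, Q) → E(A, Q)` in the middle. -/
lemma exists_pull_deflation_eq_of_pull_inflation_eq_zero (h : σ.realize δ x y) {Q : B}
    (θ : σ.Ext X Q) (hθ : σ.pull x θ = 0) : ∃ ρ : σ.Ext C Q, σ.pull y ρ = θ := by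
  obtain ⟨M, q, p, hθqp⟩ := σ.realize_ex θ
  obtain ⟨E₀, e, d, m, δ'', -, -, -, hsplit, -, hδ''⟩ := σ.et4op θ q p δ x y hθqp h
  rw [hθ] at hsplit
  obtain ⟨r, hr⟩ := exists_retraction_of_realize_zero hsplit
  refine ⟨σ.push r δ'', ?_⟩
  rw [← PreExtStruct.push_pull, hδ'', ← PreExtStruct.push_comp, hr, PreExtStruct.push_id]

/-- Exactness of `Hom(Q, C) → E(Q, A) → E(Q, X)` in the middle. -/
lemma exists_pull_eq_of_push_inflation_eq_zero (h : σ.realize δ x y) {Q : B}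
    (θ : σ.Ext Q A) (hθ : σ.push x θ = 0) : ∃ g : Q ⟶ C, σ.pull g δ = θ := by
  obtain ⟨M, k, l, hθkl⟩ := σ.realize_ex θ
  obtain ⟨b, hb, -⟩ := σ.realize_map θ (0 : σ.Ext Q X) k l biprod.inl biprod.snd x (𝟙 Q)
    hθkl (σ.realize_zero X Q) (by rw [hθ, PreExtStruct.pull_zero])
  obtain ⟨c, hc, -⟩ := σ.et3 θ δ k l x y hθkl h (𝟙 A) (b ≫ biprod.fst)
    (by rw [reassoc_of% hb]; simp)
  exact ⟨c, by rw [← hc, PreExtStruct.push_id]⟩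

end Realization

lemma IsCotorsionPair.exists_inflation_comp_eq {U V : Set B} (hUV : σ.IsCotorsionPair U V)
    {A X C : B} {x : A ⟶ X} {y : X ⟶ C} (hxy : σ.Conflation x y) (hC : C ∈ U) {Q : B}
    (hQ : Q ∈ V) (f : A ⟶ Q) : ∃ g : X ⟶ Q, x ≫ g = f :=
  let ⟨_, hδ⟩ := hxy
  exists_inflation_comp_eq_of_push_eq_zero hδ (hUV.ext_vanish hC hQ _)

lemma mem_wIdeal_of_mem_tPos {T U V : Set B} {S₀ : B}
    (hS₀ : ∀ ⦃V₀ : B⦄, V₀ ∈ V → ∀ δ : σ.Ext S₀ V₀, δ = 0) {Y : B} (hY : Y ∈ σ.tPos T U V)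
    (h : S₀ ⟶ Y) : h ∈ wIdeal (T ∩ U) S₀ Y := by
  obtain ⟨V₁, W₁, m, e, hV₁, hW₁, δY, hδY⟩ := hY
  obtain ⟨t, rfl⟩ := exists_comp_deflation_eq_of_pull_eq_zero hδY (hS₀ hV₁ (σ.pull h δY))
  exact AddSubgroup.subset_closure ⟨W₁, hW₁, t, e, rfl⟩

namespace IsReflectionSeq

variable {S T U V : Set B} {B₀ Z S₀ : B} {z : B₀ ⟶ Z} {w : Z ⟶ S₀}

lemma exists_comp_eq (hrefl : σ.IsReflectionSeq S T U V z w)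
    (twin : σ.IsTwinCotorsionPair S T U V) {Y : B} (hY : Y ∈ σ.tPos T U V) (f : B₀ ⟶ Y) :
    ∃ g : Z ⟶ Y, z ≫ g = f := by
  obtain ⟨-, hS₀, ⟨δz, hδz⟩, hlift⟩ := hrefl
  obtain ⟨V₁, W₁, m, e, hV₁, hW₁, δY, hδY⟩ := hY
  obtain ⟨θ, hθ : σ.pull z θ = σ.pull f δY⟩ := hlift hV₁ (σ.pull f δY)
  have hmθ : σ.push m θ = 0 := by
    have hzmθ : σ.pull z (σ.push m θ) = 0 := by
      rw [← PreExtStruct.push_pull, hθ, PreExtStruct.push_pull, push_inflation_eq_zero hδY,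
        PreExtStruct.pull_zero]
    obtain ⟨ρ, hρ⟩ := exists_pull_deflation_eq_of_pull_inflation_eq_zero hδz _ hzmθ
    rw [← hρ, twin.fst.ext_vanish hS₀ hW₁.1 ρ, PreExtStruct.pull_zero]
  obtain ⟨g, rfl⟩ := exists_pull_eq_of_push_inflation_eq_zero hδY θ hmθ
  have hdiff : σ.pull (f - z ≫ g) δY = 0 := by
    rw [pull_sub, PreExtStruct.pull_comp, hθ, sub_self]
  obtain ⟨t, ht⟩ := exists_comp_deflation_eq_of_pull_eq_zero hδY hdiff
  obtain ⟨t', rfl⟩ := twin.fst.exists_inflation_comp_eq ⟨δz, hδz⟩ hS₀ hW₁.1 t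
  refine ⟨g + t' ≫ e, ?_⟩
  rw [Preadditive.comp_add, ← Category.assoc, ht, add_sub_cancel]

lemma mem_wIdeal_of_comp_mem (hrefl : σ.IsReflectionSeq S T U V z w)
    (twin : σ.IsTwinCotorsionPair S T U V) {Y : B} (hY : Y ∈ σ.tPos T U V) (g : Z ⟶ Y)
    (hg : z ≫ g ∈ wIdeal (T ∩ U) B₀ Y) : g ∈ wIdeal (T ∩ U) Z Y := by
  obtain ⟨-, hS₀, ⟨δz, hδz⟩, -⟩ := hrefl
  obtain ⟨W₀, hW₀, a, b, hab⟩ :=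
    exists_factor_of_mem_wIdeal (twin.fst.addV.inter twin.snd.addU) hg
  obtain ⟨a', rfl⟩ := twin.fst.exists_inflation_comp_eq ⟨δz, hδz⟩ hS₀ hW₀.1 a
  have hz : z ≫ (g - a' ≫ b) = 0 := by
    rw [Preadditive.comp_sub, hab, Category.assoc, sub_self]
  obtain ⟨h, hh⟩ := exists_deflation_comp_eq_of_inflation_comp_eq_zero hδz hz
  have hg : g = a' ≫ b + w ≫ h := by rw [hh, add_sub_cancel]
  rw [hg]
  exact add_mem (AddSubgroup.subset_closure ⟨W₀, hW₀, a', b, rfl⟩)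
    (comp_left_mem_wIdeal _ w (mem_wIdeal_of_mem_tPos (twin.ext_SV hS₀) hY h))

lemma bijective_toQuot_map_comp (hrefl : σ.IsReflectionSeq S T U V z w)
    (twin : σ.IsTwinCotorsionPair S T U V) ⦃Y : B⦄ (hY : Y ∈ σ.tPos T U V) :
    Function.Bijective (fun g : (toQuot (T ∩ U)).obj Z ⟶ (toQuot (T ∩ U)).obj Y =>
      (toQuot (T ∩ U)).map z ≫ g) :=
  ExtriHearts.bijective_toQuot_map_comp z (hrefl.exists_comp_eq twin hY)
    (hrefl.mem_wIdeal_of_comp_mem twin hY)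

end IsReflectionSeq

end ExtStruct

/-- Proposition 2.13 / `PropFor+Adj` and Corollary 2.14.
If `B₀ --z--> Z ↠ S₀` is a reflection sequence, then for every `Y ∈ B⁺`:
(1) `(- ∘ z) : B⁺(Z,Y) → B(B₀,Y)` is surjective;
(2) `(- ∘ z̄) : B̄⁺(Z,Y) → B̄(B₀,Y)` is bijective.
Consequently `(Z, z̄)` is a reflection of `B₀` along the inclusion `B̄⁺ ↪ B̄`; in particular
`Z` is uniquely determined by `B₀` up to isomorphism in `B̄⁺`. -/
theorem statement_2 {B : Type u} [Category.{v} B] [Preadditive B] [HasFiniteBiproducts B]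
    (σ : ExtStruct B) {S T U V : Set B} (twin : σ.IsTwinCotorsionPair S T U V)
    {B₀ Z S₀ : B} (z : B₀ ⟶ Z) (w : Z ⟶ S₀) (hrefl : σ.IsReflectionSeq S T U V z w) :
    (∀ ⦃Y : B⦄, Y ∈ σ.tPos T U V →
      (∀ f : B₀ ⟶ Y, ∃ g : Z ⟶ Y, z ≫ g = f) ∧
      Function.Bijective
        (fun g : ((toQuot (T ∩ U : Set B)).obj Z ⟶ (toQuot (T ∩ U : Set B)).obj Y) =>
          (toQuot (T ∩ U : Set B)).map z ≫ g)) ∧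
    (∀ ⦃Z' S₁ : B⦄ (z' : B₀ ⟶ Z') (w' : Z' ⟶ S₁), σ.IsReflectionSeq S T U V z' w' →
      Nonempty ((toQuot (T ∩ U : Set B)).obj Z ≅ (toQuot (T ∩ U : Set B)).obj Z')) := by
  have bij := hrefl.bijective_toQuot_map_comp twin
  refine ⟨fun Y hY => ⟨hrefl.exists_comp_eq twin hY, bij hY⟩, ?_⟩
  intro Z' S₁ z' w' hrefl'
  have bij' := hrefl'.bijective_toQuot_map_comp twin
  obtain ⟨u, hu⟩ := (bij hrefl'.1).2 ((toQuot (T ∩ U)).map z')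
  obtain ⟨v, hv⟩ := (bij' hrefl.1).2 ((toQuot (T ∩ U)).map z)
  exact ⟨isoOfInjectiveComp (bij hrefl.1).1 (bij' hrefl'.1).1 u v hu hv⟩

end ExtriHearts
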